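/- Let R be a commutative G-graded ring such that the clique number of Gr_G(R) is finite and greater than 1. Then R has only finitely many graded maximal ideals. -/

import Mathlib

/-!
Distinct graded maximal ideals are comaximal. If two of them, `M` and `N` (possibly equal),
meet in `0`, then a third one `P` would be comaximal with `M * N = 0`, so there are at most
two. Otherwise the graded maximal ideals are nonzero, pairwise meet nontrivially, and hence
form a clique of `Gr_G(R)`, which is finite because the clique number is.
-/

variable {G R : Type*} [AddGroup G] [DecidableEq G] [CommRing R]

/-- The set of proper nontrivial `G`-graded ideals of `R`. -/
def hV (𝒜 : G → AddSubgroup R) [GradedRing 𝒜] : Set (Ideal R) :=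
  {I | I ≠ ⊥ ∧ I ≠ ⊤ ∧ Ideal.IsHomogeneous 𝒜 I}

/-- The intersection graph on a set of ideals: two distinct ideals are
adjacent iff their intersection is nonzero. -/
def interGraph (V : Set (Ideal R)) : SimpleGraph V where
  Adj I J := I ≠ J ∧ (I : Ideal R) ⊓ (J : Ideal R) ≠ ⊥
  symm := ⟨fun I J ⟨h1, h2⟩ => ⟨h1.symm, by rwa [inf_comm] at h2⟩⟩
  loopless := ⟨fun I ⟨h1, _⟩ => h1 rfl⟩
/-- The clique number of a simple graph, as an extended natural number. -/
noncomputable def cliqueNumE {V : Type*} (Γ : SimpleGraph V) : ℕ∞ :=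
  ⨆ s : {s : Finset V // Γ.IsClique (s : Set V)}, ((s : Finset V).card : ℕ∞)

theorem Ideal.inf_ne_bot_of_sup_eq_top {P M N : Ideal R} (hP : P ≠ ⊤) (hM : P ⊔ M = ⊤)
    (hN : P ⊔ N = ⊤) : M ⊓ N ≠ ⊥ := by
  intro hMN
  have hMN' : M * N ≤ ⊥ := Ideal.mul_le_inf.trans hMN.le
  apply hP
  rw [← hN, ← Ideal.sup_mul_eq_of_coprime_left hM, le_bot_iff.mp hMN', sup_bot_eq]

theorem SimpleGraph.IsClique.finite_of_cliqueNumE_lt_top {V : Type*} {Γ : SimpleGraph V}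
    {s : Set V} (hs : Γ.IsClique s) (hΓ : cliqueNumE Γ < ⊤) : s.Finite := by
  by_contra hinf
  obtain ⟨m, hm⟩ := WithTop.ne_top_iff_exists.mp hΓ.ne
  obtain ⟨t, hts, htcard⟩ := Set.Infinite.exists_subset_card_eq hinf (m + 1)
  have hle : ((m + 1 : ℕ) : ℕ∞) ≤ cliqueNumE Γ := by
    rw [← htcard]
    exact le_iSup (fun t : {t : Finset V // Γ.IsClique (t : Set V)} => ((t : Finset V).card : ℕ∞))
      ⟨t, hs.subset hts⟩
  rw [← hm] at hle
  exact absurd (Nat.cast_le.mp hle) (by omega)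

theorem Set.Finite.of_pairwise_inf_ne_bot {V S : Set (Ideal R)} (hSV : S ⊆ V)
    (hS : S.Pairwise fun I J => I ⊓ J ≠ ⊥) (hΓ : cliqueNumE (interGraph V) < ⊤) : S.Finite := by
  have hclique : (interGraph V).IsClique (Subtype.val ⁻¹' S : Set V) :=
    fun I hI J hJ hIJ => ⟨hIJ, hS hI hJ (Subtype.val_injective.ne hIJ)⟩
  rw [← Set.image_preimage_eq_of_subset (hSV.trans Subtype.range_coe.superset)]
  exact (hclique.finite_of_cliqueNumE_lt_top hΓ).image _

def IsGradedMaximal (𝒜 : G → AddSubgroup R) [GradedRing 𝒜] (M : Ideal R) : Prop :=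
  M ≠ ⊤ ∧ M.IsHomogeneous 𝒜 ∧ ∀ J : Ideal R, J.IsHomogeneous 𝒜 → M < J → J = ⊤

namespace IsGradedMaximal

variable {𝒜 : G → AddSubgroup R} [GradedRing 𝒜] {M N P : Ideal R}

theorem sup_eq_top_of_ne (hM : IsGradedMaximal 𝒜 M) (hN : IsGradedMaximal 𝒜 N) (hMN : M ≠ N) :
    M ⊔ N = ⊤ := by
  refine hM.2.2 _ (hM.2.1.sup hN.2.1) (left_lt_sup.mpr fun hNM => ?_)
  rcases hNM.lt_or_eq with hlt | heq
  · exact hM.1 (hN.2.2 M hM.2.1 hlt)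
  · exact hMN heq.symm

theorem eq_or_eq_of_inf_eq_bot (hP : IsGradedMaximal 𝒜 P) (hM : IsGradedMaximal 𝒜 M)
    (hN : IsGradedMaximal 𝒜 N) (hMN : M ⊓ N = ⊥) : P = M ∨ P = N := by
  by_contra! h
  exact Ideal.inf_ne_bot_of_sup_eq_top hP.1 (hP.sup_eq_top_of_ne hM h.1)
    (hP.sup_eq_top_of_ne hN h.2) hMN

end IsGradedMaximal

theorem stmt8_general (𝒜 : G → AddSubgroup R) [GradedRing 𝒜]
    (h2 : cliqueNumE (interGraph (hV 𝒜)) < ⊤) :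
    {M : Ideal R | M ≠ ⊤ ∧ Ideal.IsHomogeneous 𝒜 M ∧
      ∀ J : Ideal R, Ideal.IsHomogeneous 𝒜 J → M < J → J = ⊤}.Finite := by
  change {M | IsGradedMaximal 𝒜 M}.Finite
  by_cases hzero : ∃ M N, IsGradedMaximal 𝒜 M ∧ IsGradedMaximal 𝒜 N ∧ M ⊓ N = ⊥
  · obtain ⟨M, N, hM, hN, hMN⟩ := hzero
    exact (Set.toFinite {M, N}).subset fun P hP => hP.eq_or_eq_of_inf_eq_bot hM hN hMN
  · push Not at hzero
    have hsub : {M | IsGradedMaximal 𝒜 M} ⊆ hV 𝒜 := fun M hM =>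
      ⟨by simpa using hzero M M hM hM, hM.1, hM.2.1⟩
    exact .of_pairwise_inf_ne_bot hsub (fun M hM N hN _ => hzero M N hM hN) h2

/-- If the clique number of the intersection graph of graded ideals of
a commutative `G`-graded ring is finite and greater than 1, then `R` has only
finitely many graded maximal ideals. -/
theorem stmt8 (𝒜 : G → AddSubgroup R) [GradedRing 𝒜]
    (h1 : 1 < cliqueNumE (interGraph (hV 𝒜)))
    (h2 : cliqueNumE (interGraph (hV 𝒜)) < ⊤) :
    {M : Ideal R | M ≠ ⊤ ∧ Ideal.IsHomogeneous 𝒜 M ∧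
      ∀ J : Ideal R, Ideal.IsHomogeneous 𝒜 J → M < J → J = ⊤}.Finite :=
  stmt8_general 𝒜 h2
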